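/- arXiv:2211.01479 — 3 statements merged into one kernel-verified Lean document; each statement's English description precedes it below -/
import Mathlib

section
/- Let A be a Banach algebra equipped with a nonzero multiplicative continuous linear functional e : A → ℂ, and let P = {a ∈ A : e(a) = 1, ‖a‖ = 1}. Suppose there exists a net (ν_α) in P such that for every ν ∈ P, ‖ν·ν_α − ν_α‖ → 0. Then there exists m ∈ A** with m ≥ 0 in the sense that m(e) = 1 = ‖m‖, and m(φ·ν) = m(φ) for every ν ∈ P and φ ∈ A*, where (φ·ν)(μ) := φ(ν·μ). -/
/-! The mean is a weak-* cluster point of the net `ν_α`, viewed in the closed unit ball of `A**`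
(compact by Banach–Alaoglu). Invariance holds because `(φ·ν - φ)(ν_α) → 0`, and `m(e) = 1` because
`e(ν_α) = 1`. The norm is exactly `1` because a multiplicative functional has norm at most `1`:
`‖e a‖ ^ n = ‖e (a ^ n)‖ ≤ ‖e‖ ‖a‖ ^ n` for all `n ≥ 1`. -/

open Filter Topology

lemma le_of_forall_pow_succ_le_mul_pow {x y C : ℝ} (hy : 0 ≤ y)
    (h : ∀ n : ℕ, x ^ (n + 1) ≤ C * y ^ (n + 1)) : x ≤ y := by
  by_contra! hyx
  obtain rfl | hy := hy.eq_or_lt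
  · have h0 := h 0
    simp only [zero_add, pow_one, mul_zero] at h0
    linarith
  obtain ⟨n, hn⟩ := pow_unbounded_of_one_lt C ((one_lt_div hy).2 hyx)
  have hC : (x / y) ^ (n + 1) ≤ C := by
    rw [div_pow, div_le_iff₀ (pow_pos hy _)]
    exact h n
  exact (hn.trans_le (pow_le_pow_right₀ ((one_lt_div hy).2 hyx).le n.le_succ)).not_ge hC

section MultiplicativeFunctional

variable {𝕜 A : Type*} [NontriviallyNormedField 𝕜] [NormedRing A] [NormedAlgebra 𝕜 A]
  {e : A →L[𝕜] 𝕜}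

lemma map_pow_succ_of_map_mul (hmul : ∀ a b : A, e (a * b) = e a * e b) (a : A) (n : ℕ) :
    e (a ^ (n + 1)) = e a ^ (n + 1) := by
  induction n with
  | zero => simp
  | succ n ih => rw [pow_succ, hmul, ih, ← pow_succ]

lemma norm_apply_le_of_map_mul (hmul : ∀ a b : A, e (a * b) = e a * e b) (a : A) :
    ‖e a‖ ≤ ‖a‖ :=
  le_of_forall_pow_succ_le_mul_pow (norm_nonneg a) fun n =>
    calc ‖e a‖ ^ (n + 1) = ‖e (a ^ (n + 1))‖ := by rw [map_pow_succ_of_map_mul hmul, norm_pow]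
      _ ≤ ‖e‖ * ‖a ^ (n + 1)‖ := e.le_opNorm _
      _ ≤ ‖e‖ * ‖a‖ ^ (n + 1) := by gcongr; exact norm_pow_le' a n.succ_pos

lemma opNorm_le_one_of_map_mul (hmul : ∀ a b : A, e (a * b) = e a * e b) : ‖e‖ ≤ 1 :=
  e.opNorm_le_bound zero_le_one fun a => by simpa using norm_apply_le_of_map_mul hmul a

end MultiplicativeFunctional

/-- `m` is a weak-* cluster point of `u`, which exists by Banach–Alaoglu. -/
lemma StrongDual.exists_norm_le_forall_tendsto_apply_eq {𝕜 E ι : Type*}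
    [NontriviallyNormedField 𝕜] [ProperSpace 𝕜] [NormedAddCommGroup E] [NormedSpace 𝕜 E]
    {F : Filter ι} [F.NeBot]
    {u : ι → StrongDual 𝕜 E} {r : ℝ} (hu : ∀ i, ‖u i‖ ≤ r) :
    ∃ m : StrongDual 𝕜 E, ‖m‖ ≤ r ∧
      ∀ x b, Tendsto (fun i => u i x) F (𝓝 b) → m x = b := by
  let w : ι → WeakDual 𝕜 E := fun i => StrongDual.toWeakDual (u i)
  have hw : map w F ≤ 𝓟 (WeakDual.toStrongDual ⁻¹' Metric.closedBall 0 r) :=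
    le_principal_iff.2 <| mem_map.2 <| univ_mem' fun i => mem_closedBall_zero_iff.2 (hu i)
  obtain ⟨m, hm, hcluster⟩ := (WeakDual.isCompact_closedBall 0 r).exists_mapClusterPt hw
  refine ⟨WeakDual.toStrongDual m, mem_closedBall_zero_iff.1 hm, fun x b hb => ?_⟩
  have hx : MapClusterPt (m x) F (fun i => u i x) :=
    hcluster.continuousAt_comp (WeakDual.eval_continuous x).continuousAt
  exact eq_of_nhds_neBot (hx.clusterPt.mono hb)

theorem exists_TLIM_of_asymptotically_invariant_net_general
    {A : Type*} [NormedRing A] [NormedAlgebra ℂ A]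
    (e : A →L[ℂ] ℂ) (hmul : ∀ a b : A, e (a * b) = e a * e b)
    (P : Set A) (hP : P = {a : A | e a = 1 ∧ ‖a‖ = 1})
    {ι : Type*} (F : Filter ι) [F.NeBot] (ν' : ι → A) (hν' : ∀ i, ν' i ∈ P)
    (hconv : ∀ ν ∈ P, Tendsto (fun i => ‖ν * ν' i - ν' i‖) F (nhds 0)) :
    ∃ m : (A →L[ℂ] ℂ) →L[ℂ] ℂ, m e = 1 ∧ ‖m‖ = 1 ∧
      ∀ ν ∈ P, ∀ φ : A →L[ℂ] ℂ,
        m (φ.comp (ContinuousLinearMap.mul ℂ A ν)) = m φ := by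
  subst hP
  obtain ⟨m, hm, hlim⟩ := StrongDual.exists_norm_le_forall_tendsto_apply_eq (F := F)
    (u := fun i => NormedSpace.inclusionInDoubleDual ℂ A (ν' i)) (r := 1) fun i =>
      (hν' i).2 ▸ NormedSpace.double_dual_bound ℂ A (ν' i)
  have hme : m e = 1 := hlim e 1 (by simp [(hν' _).1])
  refine ⟨m, hme, le_antisymm hm ?_, fun ν hν φ => ?_⟩
  · calc (1 : ℝ) = ‖m e‖ := by simp [hme]
      _ ≤ ‖m‖ * ‖e‖ := m.le_opNorm e
      _ ≤ ‖m‖ := mul_le_of_le_one_right (norm_nonneg m) (opNorm_le_one_of_map_mul hmul)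
  · have hψ : Tendsto (fun i => (φ.comp (ContinuousLinearMap.mul ℂ A ν) - φ) (ν' i)) F (𝓝 0) := by
      refine squeeze_zero_norm (fun i => ?_) (by simpa using (hconv ν hν).const_mul ‖φ‖)
      simpa [← map_sub] using φ.le_opNorm (ν * ν' i - ν' i)
    have hm0 := hlim _ 0 (by simpa only [NormedSpace.dual_def] using hψ)
    rwa [map_sub, sub_eq_zero] at hm0

/-- If a Banach algebra `A` with nonzero multiplicative continuous functional `e` and
`P = {a : e(a) = 1, ‖a‖ = 1}` admits a net `(ν_α)` in `P` with `‖ν·ν_α − ν_α‖ → 0` for every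
`ν ∈ P`, then there is a topological left invariant mean: `m ∈ A**` with `m(e) = 1 = ‖m‖` and
`m(φ·ν) = m(φ)` for all `ν ∈ P`, `φ ∈ A*`, where `(φ·ν)(μ) = φ(ν·μ)`. -/
theorem exists_TLIM_of_asymptotically_invariant_net
    {A : Type*} [NormedRing A] [NormedAlgebra ℂ A] [CompleteSpace A]
    (e : A →L[ℂ] ℂ) (he : e ≠ 0) (hmul : ∀ a b : A, e (a * b) = e a * e b)
    (P : Set A) (hP : P = {a : A | e a = 1 ∧ ‖a‖ = 1})
    {ι : Type*} (F : Filter ι) [F.NeBot] (ν' : ι → A) (hν' : ∀ i, ν' i ∈ P)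
    (hconv : ∀ ν ∈ P, Tendsto (fun i => ‖ν * ν' i - ν' i‖) F (nhds 0)) :
    ∃ m : (A →L[ℂ] ℂ) →L[ℂ] ℂ, m e = 1 ∧ ‖m‖ = 1 ∧
      ∀ ν ∈ P, ∀ φ : A →L[ℂ] ℂ,
        m (φ.comp (ContinuousLinearMap.mul ℂ A ν)) = m φ :=
  exists_TLIM_of_asymptotically_invariant_net_general e hmul P hP F ν' hν' hconv
end

section
/- With the setup of a measurable space K, a measurable family of probability measures p_x*p_y defining convolution of finite measures, and a measurable subset H closed under convolution: for finite nonnegative measures μ, ν on K with μ concentrated on H, the total variation of the difference (μ*ν)|_H − (μ|_H)*(ν|_H) is at most ∫_H ν(ỹH ∩ H^c) dμ(y), where ỹH := {z ∈ K : (p_y*p_z)(H) > 0}. -/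
open MeasureTheory
open scoped ENNReal

/-- Convolution of finite measures induced by a family of probability measures `p x y`. -/
noncomputable def conv {K : Type*} [MeasurableSpace K] (p : K → K → Measure K)
    (μ ν : Measure K) : Measure K :=
  μ.bind fun x => ν.bind fun y => p x y

/-- The induced convolution on `H`, restricting the measures `p x y` to `H`. -/
noncomputable def convH {K : Type*} [MeasurableSpace K] (p : K → K → Measure K) (H : Set K)
    (lam sigma : Measure H) : Measure H :=
  lam.bind fun x => sigma.bind fun y =>
    Measure.comap (fun z : H => (z : K)) (p (x : K) (y : K))

/-!
Identify `(μ|_H) * (ν|_H)` on `H` with the restriction to `H` of `μ * (ν|_H)` on `K`; since `μ` is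
concentrated on `H`, linearity in the second factor gives `μ * ν = μ * (ν|_H) + μ * (ν|_{Hᶜ})`.
The difference of the two sides on a set `B ⊆ H` is thus `(μ * (ν|_{Hᶜ}))(B)`, which is
nonnegative and at most `∫ ν({z | (p_y*p_z)(H) > 0} ∩ Hᶜ) dμ(y)`, because `(p_y*p_z)(B)` vanishes
unless `(p_y*p_z)(H) > 0` and is at most `1`.
-/

namespace MeasureTheory.Measure

variable {α β γ : Type*} [MeasurableSpace α] [MeasurableSpace β] [MeasurableSpace γ]

theorem measurable_comap_comp {f : α → Measure β} {e : γ → β} (he : MeasurableEmbedding e)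
    (hf : Measurable f) : Measurable fun a => (f a).comap e :=
  measurable_of_measurable_coe _ fun s hs => by
    simp_rw [he.comap_apply]
    exact measurable_coe (he.measurableSet_image' hs) |>.comp hf

theorem bind_map_of_measurable {m : Measure α} {e : α → β} {f : β → Measure γ}
    (he : Measurable e) (hf : Measurable f) : (m.map e).bind f = m.bind (f ∘ e) := by
  ext s hs
  rw [bind_apply hs hf.aemeasurable, bind_apply hs (hf.comp he).aemeasurable,
    lintegral_map (f := fun b => f b s) ((measurable_coe hs).comp hf) he]
  rfl

theorem comap_bind {m : Measure α} {f : α → Measure β} {e : γ → β} (he : MeasurableEmbedding e)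
    (hf : Measurable f) : (m.bind f).comap e = m.bind fun a => (f a).comap e := by
  ext s hs
  rw [he.comap_apply, bind_apply (he.measurableSet_image' hs) hf.aemeasurable,
    bind_apply hs (measurable_comap_comp he hf).aemeasurable]
  simp_rw [he.comap_apply]

theorem bind_comap_subtype_val {m : Measure α} {s : Set α} (hs : MeasurableSet s)
    {f : α → Measure β} (hf : Measurable f) :
    (m.comap (↑)).bind (fun x : s => f x) = (m.restrict s).bind f := by
  rw [← map_comap_subtype_coe hs, bind_map_of_measurable measurable_subtype_coe hf]
  rfl

theorem toReal_sub_sub_le_of_eq_add {L R E : Measure α} [IsFiniteMeasure L] (hL : L = R + E)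
    (s t : Set α) {D : ℝ≥0∞} (hD : D ≠ ∞) (hE : E s ≤ D) :
    (L s).toReal - (R s).toReal - ((L t).toReal - (R t).toReal) ≤ D.toReal := by
  have hfin : ∀ u, R u ≠ ∞ ∧ E u ≠ ∞ := fun u => by
    simpa [hL] using measure_ne_top L u
  have hsplit : ∀ u, (L u).toReal = (R u).toReal + (E u).toReal := fun u => by
    rw [hL, add_apply, ENNReal.toReal_add (hfin u).1 (hfin u).2]
  linarith [hsplit s, hsplit t, ENNReal.toReal_nonneg (a := E t), ENNReal.toReal_mono hD hE]

end MeasureTheory.Measure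

section Convolution

variable {K : Type*} [MeasurableSpace K] {p : K → K → Measure K}

theorem measurable_uncurry_of_measurable_apply
    (hpm : ∀ B : Set K, MeasurableSet B → Measurable fun z : K × K => p z.1 z.2 B) :
    Measurable (Function.uncurry p) :=
  Measure.measurable_of_measurable_coe _ hpm

theorem measurable_lintegral_apply (hp : Measurable (Function.uncurry p)) (ν : Measure K)
    [SFinite ν] {s : Set K} (hs : MeasurableSet s) : Measurable fun x => ∫⁻ y, p x y s ∂ν :=
  Measurable.lintegral_prod_right (f := fun x y => p x y s) ((Measure.measurable_coe hs).comp hp)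

theorem measurable_bind_of_measurable_uncurry (hp : Measurable (Function.uncurry p))
    (ν : Measure K) [SFinite ν] : Measurable fun x => ν.bind (p x) :=
  Measure.measurable_of_measurable_coe _ fun s hs => by
    convert measurable_lintegral_apply hp ν hs using 2 with x
    exact Measure.bind_apply hs hp.of_uncurry_left.aemeasurable

theorem conv_apply (hp : Measurable (Function.uncurry p)) (μ ν : Measure K) [SFinite ν]
    {s : Set K} (hs : MeasurableSet s) : conv p μ ν s = ∫⁻ x, ∫⁻ y, p x y s ∂ν ∂μ := by
  rw [conv, Measure.bind_apply hs (measurable_bind_of_measurable_uncurry hp ν).aemeasurable]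
  simp_rw [Measure.bind_apply hs hp.of_uncurry_left.aemeasurable]

theorem conv_add_right (hp : Measurable (Function.uncurry p)) (μ ν₁ ν₂ : Measure K)
    [SFinite ν₁] [SFinite ν₂] : conv p μ (ν₁ + ν₂) = conv p μ ν₁ + conv p μ ν₂ := by
  ext s hs
  simp_rw [Measure.add_apply, conv_apply hp _ _ hs, lintegral_add_measure]
  exact lintegral_add_left (measurable_lintegral_apply hp ν₁ hs) _

theorem convH_comap_subtype_val (hp : Measurable (Function.uncurry p)) {H : Set K}
    (hH : MeasurableSet H) (μ ν : Measure K) [SFinite ν] :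
    convH p H (μ.comap Subtype.val) (ν.comap Subtype.val)
      = (conv p (μ.restrict H) (ν.restrict H)).comap Subtype.val := by
  have he := MeasurableEmbedding.subtype_coe hH
  have hinner : ∀ x : K, (ν.comap Subtype.val).bind (fun y : H => (p x y).comap Subtype.val)
      = ((ν.restrict H).bind (p x)).comap Subtype.val := fun x => by
    rw [Measure.bind_comap_subtype_val hH
        (Measure.measurable_comap_comp he hp.of_uncurry_left),
      Measure.comap_bind he hp.of_uncurry_left]
  simp_rw [convH, hinner]
  rw [conv, Measure.bind_comap_subtype_val hH
      (Measure.measurable_comap_comp he (measurable_bind_of_measurable_uncurry hp _)),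
    Measure.comap_bind he (measurable_bind_of_measurable_uncurry hp _)]

theorem conv_apply_le_of_subset [∀ x y, IsProbabilityMeasure (p x y)] (μ ν : Measure K)
    {s H : Set K} (hs : MeasurableSet s) (hsH : s ⊆ H) :
    conv p μ ν s ≤ ∫⁻ x, ν {z | 0 < p x z H} ∂μ := by
  refine (Measure.bind_apply_le _ hs).trans (lintegral_mono fun x => ?_)
  refine (Measure.bind_apply_le _ hs).trans ((lintegral_mono fun y => ?_).trans
    (lintegral_indicator_one_le _))
  by_cases hy : 0 < p x y H
  · simpa [Set.indicator_of_mem, hy] using prob_le_one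
  · simp only [not_lt, nonpos_iff_eq_zero] at hy
    simpa [hy] using measure_mono_null hsH hy

theorem isFiniteMeasure_conv [∀ x y, IsProbabilityMeasure (p x y)]
    (hp : Measurable (Function.uncurry p)) (μ ν : Measure K) [IsFiniteMeasure μ]
    [IsFiniteMeasure ν] : IsFiniteMeasure (conv p μ ν) := by
  refine ⟨?_⟩
  simp [conv_apply hp μ ν MeasurableSet.univ, lintegral_const, ENNReal.mul_lt_top]

theorem measurable_measure_setOf_pos_inter (hp : Measurable (Function.uncurry p)) {H : Set K}
    (hH : MeasurableSet H) (ν : Measure K) [SFinite ν] {t : Set K} (ht : MeasurableSet t) :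
    Measurable fun x => ν ({z | 0 < p x z H} ∩ t) := by
  have hS : MeasurableSet {q : K × K | 0 < p q.1 q.2 H ∧ q.2 ∈ t} :=
    (measurableSet_lt measurable_const ((Measure.measurable_coe hH).comp hp)).inter
      (measurable_snd ht)
  exact measurable_measure_prodMk_left hS

end Convolution

/-- The total variation of `L − R` is encoded as the supremum over measurable `B, C` of
`(L(B) − R(B)) − (L(C) − R(C))`. -/
theorem tv_restrict_conv_sub_conv_restrict_le_general
    {K : Type*} [MeasurableSpace K] (p : K → K → Measure K)
    (hp : ∀ x y, IsProbabilityMeasure (p x y))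
    (hpm : ∀ B : Set K, MeasurableSet B → Measurable fun z : K × K => p z.1 z.2 B)
    {H : Set K} (hH : MeasurableSet H)
    (μ ν : Measure K) [IsFiniteMeasure μ] [IsFiniteMeasure ν] (hμH : μ Hᶜ = 0) :
    ∀ B C : Set H, MeasurableSet B → MeasurableSet C →
      (((Measure.comap (fun y : H => (y : K)) (conv p μ ν)) B).toReal
          - ((convH p H (Measure.comap (fun y : H => (y : K)) μ)
              (Measure.comap (fun y : H => (y : K)) ν)) B).toReal)
        - (((Measure.comap (fun y : H => (y : K)) (conv p μ ν)) C).toReal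
          - ((convH p H (Measure.comap (fun y : H => (y : K)) μ)
              (Measure.comap (fun y : H => (y : K)) ν)) C).toReal)
      ≤ ∫ y in H, (ν ({z : K | 0 < p y z H} ∩ Hᶜ)).toReal ∂μ := by
  intro B C hB _
  have hpu := measurable_uncurry_of_measurable_apply hpm
  have hμ : μ.restrict H = μ := Measure.restrict_eq_self_of_ae_mem (mem_ae_iff.2 hμH)
  have hsplit : conv p μ ν = conv p μ (ν.restrict H) + conv p μ (ν.restrict Hᶜ) := by
    rw [← conv_add_right hpu, Measure.restrict_add_restrict_compl hH]
  have hD : ∫⁻ x, ν ({z | 0 < p x z H} ∩ Hᶜ) ∂μ ≠ ∞ :=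
    (IsFiniteMeasure.lintegral_lt_top_of_bounded_to_ennreal μ
      ⟨(ν Set.univ).toNNReal, fun x => by simpa using measure_mono (Set.subset_univ _)⟩).ne
  have := isFiniteMeasure_conv hpu μ ν
  rw [convH_comap_subtype_val hpu hH, hμ, integral_toReal
      (measurable_measure_setOf_pos_inter hpu hH ν hH.compl).aemeasurable
      (ae_of_all _ fun _ => measure_lt_top _ _)]
  simp only [comap_subtype_coe_apply hH]
  refine Measure.toReal_sub_sub_le_of_eq_add hsplit _ _ hD ?_
  calc conv p μ (ν.restrict Hᶜ) (Subtype.val '' B)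
      ≤ ∫⁻ x, ν.restrict Hᶜ {z | 0 < p x z H} ∂μ :=
        conv_apply_le_of_subset μ _ (hH.subtype_image hB) (Subtype.coe_image_subset _ _)
    _ = ∫⁻ x, ν ({z | 0 < p x z H} ∩ Hᶜ) ∂μ := by simp_rw [Measure.restrict_apply' hH.compl]

/-- For `μ` a finite nonnegative measure concentrated on `H` and `ν` a finite nonnegative
measure on `K`, the total variation of `(μ*ν)|_H − (μ|_H)*(ν|_H)` is at most
`∫_H ν(ỹH ∩ H^c) dμ(y)`, where `ỹH = {z : (p y z)(H) > 0}`.  (The total variation of the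
difference of measures `L − R` is expressed as `sup over measurable B, C` of
`(L(B) − R(B)) − (L(C) − R(C))`.) -/
theorem tv_restrict_conv_sub_conv_restrict_le
    {K : Type*} [MeasurableSpace K] (p : K → K → Measure K)
    (hp : ∀ x y, IsProbabilityMeasure (p x y))
    (hpm : ∀ B : Set K, MeasurableSet B → Measurable fun z : K × K => p z.1 z.2 B)
    {H : Set K} (hH : MeasurableSet H)
    (hclosed : ∀ x ∈ H, ∀ y ∈ H, p x y Hᶜ = 0)
    (htilde : ∀ y : K, MeasurableSet {z : K | 0 < p y z H})
    (μ ν : Measure K) [IsFiniteMeasure μ] [IsFiniteMeasure ν] (hμH : μ Hᶜ = 0) :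
    ∀ B C : Set H, MeasurableSet B → MeasurableSet C →
      (((Measure.comap (fun y : H => (y : K)) (conv p μ ν)) B).toReal
          - ((convH p H (Measure.comap (fun y : H => (y : K)) μ)
              (Measure.comap (fun y : H => (y : K)) ν)) B).toReal)
        - (((Measure.comap (fun y : H => (y : K)) (conv p μ ν)) C).toReal
          - ((convH p H (Measure.comap (fun y : H => (y : K)) μ)
              (Measure.comap (fun y : H => (y : K)) ν)) C).toReal)
      ≤ ∫ y in H, (ν ({z : K | 0 < p y z H} ∩ Hᶜ)).toReal ∂μ :=
  tv_restrict_conv_sub_conv_restrict_le_general p hp hpm hH μ ν hμH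
end

section
/- Let A be a Banach algebra with nonzero multiplicative continuous functional e. If A is commutative and P = {ν ∈ A : e(ν) = 1, ‖ν‖ = 1} is nonempty and closed under multiplication, then there exists a topological left invariant mean: an m ∈ A** with m positive, m(e) = ‖m‖ = 1, and m(L_ν φ) = m(φ) for all ν ∈ P, φ ∈ A*. -/
open Filter Set Finset Topology
set_option linter.unusedSectionVars false

section Aux
variable {A : Type*} [NormedCommRing A] [NormedAlgebra ℂ A]

/-- Cesàro-type average of powers. -/
private noncomputable def birk (ν : A) (n : ℕ) : A := (n : ℂ)⁻¹ • ∑ k ∈ Finset.range n, ν ^ (k + 1)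

private lemma pow_mem_P {P : Set A} (hPmul : ∀ a ∈ P, ∀ b ∈ P, a * b ∈ P)
    {ν : A} (hν : ν ∈ P) : ∀ k : ℕ, ν ^ (k + 1) ∈ P := by
  intro k
  induction k with
  | zero => simpa using hν
  | succ k ih => rw [pow_succ]; exact hPmul _ ih _ hν

private lemma birk_norm_le {ν : A} (hν : ‖ν‖ = 1) (n : ℕ) : ‖birk ν n‖ ≤ 1 := by
  rcases Nat.eq_zero_or_pos n with h | h
  · simp [birk, h]
  have h1 : ‖∑ k ∈ Finset.range n, ν ^ (k + 1)‖ ≤ n := by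
    calc ‖∑ k ∈ Finset.range n, ν ^ (k + 1)‖ ≤ ∑ k ∈ Finset.range n, ‖ν ^ (k + 1)‖ :=
          norm_sum_le _ _
      _ ≤ ∑ k ∈ Finset.range n, 1 := by
          refine Finset.sum_le_sum fun k _ => ?_
          calc ‖ν ^ (k + 1)‖ ≤ ‖ν‖ ^ (k + 1) := norm_pow_le' _ (Nat.succ_pos k)
            _ = 1 := by rw [hν, one_pow]
      _ = n := by simp
  calc ‖birk ν n‖ = ‖(n : ℂ)⁻¹‖ * ‖∑ k ∈ Finset.range n, ν ^ (k + 1)‖ := norm_smul _ _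
    _ ≤ (n : ℝ)⁻¹ * n := by
        refine mul_le_mul ?_ h1 (norm_nonneg _) (by positivity)
        simp
    _ = 1 := by
        field_simp
  
private lemma birk_shift (ν : A) (n : ℕ) :
    ν * birk ν n - birk ν n = (n : ℂ)⁻¹ • (ν ^ (n + 1) - ν) := by
  have : ν * birk ν n - birk ν n
      = (n : ℂ)⁻¹ • (∑ k ∈ Finset.range n, (ν ^ (k + 1 + 1) - ν ^ (k + 1))) := by
    simp only [birk, mul_smul_comm, Finset.mul_sum, Finset.sum_sub_distrib, smul_sub]
    congr 2
    refine Finset.sum_congr rfl fun k _ => ?_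
    ring
  rw [this, Finset.sum_range_sub (fun k => ν ^ (k + 1))]
  norm_num

private lemma birk_shift_norm {ν : A} (hν : ‖ν‖ = 1) (n : ℕ) :
    ‖ν * birk ν n - birk ν n‖ ≤ 2 / n := by
  rw [birk_shift, norm_smul]
  have h1 : ‖ν ^ (n + 1) - ν‖ ≤ 2 := by
    calc ‖ν ^ (n + 1) - ν‖ ≤ ‖ν ^ (n + 1)‖ + ‖ν‖ := norm_sub_le _ _
      _ ≤ 1 + 1 := by
          gcongr
          · calc ‖ν ^ (n + 1)‖ ≤ ‖ν‖ ^ (n + 1) := norm_pow_le' _ (Nat.succ_pos n)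
              _ = 1 := by rw [hν, one_pow]
          · exact hν.le
      _ = 2 := by norm_num
  calc ‖(n : ℂ)⁻¹‖ * ‖ν ^ (n + 1) - ν‖ ≤ (n : ℝ)⁻¹ * 2 := by
        refine mul_le_mul ?_ h1 (norm_nonneg _) (by positivity)
        simp
    _ = 2 / n := by ring

private lemma birk_hull {P : Set A} (hPmul : ∀ a ∈ P, ∀ b ∈ P, a * b ∈ P)
    {ν : A} (hν : ν ∈ P) {n : ℕ} (hn : 1 ≤ n) : birk ν n ∈ convexHull ℝ P := by
  have hrepr : birk ν n = ∑ k ∈ Finset.range n, ((n : ℝ)⁻¹) • ν ^ (k + 1) := by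
    rw [birk, Finset.smul_sum]
    refine Finset.sum_congr rfl fun k _ => ?_
    rw [← Complex.coe_smul]
    norm_num
  rw [hrepr]
  refine (convex_convexHull ℝ P).sum_mem (fun k _ => by positivity) ?_
    (fun k _ => subset_convexHull ℝ P (pow_mem_P hPmul hν k))
  rw [Finset.sum_const, Finset.card_range, nsmul_eq_mul]
  field_simp

private lemma hull_mul {P : Set A} (hPmul : ∀ a ∈ P, ∀ b ∈ P, a * b ∈ P) :
    ∀ a ∈ convexHull ℝ P, ∀ b ∈ convexHull ℝ P, a * b ∈ convexHull ℝ P := by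
  have step1 : ∀ b ∈ P, ∀ a ∈ convexHull ℝ P, a * b ∈ convexHull ℝ P := by
    intro b hb a ha
    have hconv : Convex ℝ ((fun a : A => a * b) ⁻¹' (convexHull ℝ P)) :=
      (convex_convexHull ℝ P).is_linear_preimage
        ⟨fun x y => add_mul x y b, fun c x => smul_mul_assoc c x b⟩
    refine convexHull_min (fun p hp => ?_) hconv ha
    simp only [Set.mem_preimage]
    exact subset_convexHull ℝ P (hPmul p hp b hb)
  intro a ha b hb
  have hconv : Convex ℝ ((fun b : A => a * b) ⁻¹' (convexHull ℝ P)) :=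
    (convex_convexHull ℝ P).is_linear_preimage
      ⟨fun x y => mul_add a x y, fun c x => mul_smul_comm c a x⟩
  refine convexHull_min (fun p hp => ?_) hconv hb
  simp only [Set.mem_preimage]
  exact step1 p hp a ha

private lemma mul_prod_norm_le {ι : Type*} (f : ι → A) (S : Finset ι) :
    ∀ a : A, ‖a‖ ≤ 1 → (∀ μ ∈ S, ‖f μ‖ ≤ 1) → ‖a * ∏ μ ∈ S, f μ‖ ≤ 1 := by
  classical
  induction S using Finset.induction_on with
  | empty => intro a ha _; simpa using ha
  | @insert μ S hμ ih =>
      intro a ha hf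
      rw [Finset.prod_insert hμ, ← mul_assoc]
      refine ih (a * f μ) ?_ (fun μ' hμ' => hf μ' (Finset.mem_insert_of_mem hμ'))
      calc ‖a * f μ‖ ≤ ‖a‖ * ‖f μ‖ := norm_mul_le _ _
        _ ≤ 1 := mul_le_one₀ ha (norm_nonneg _) (hf μ (Finset.mem_insert_self μ S))

private lemma mul_prod_hull_mem {ι : Type*} {P : Set A}
    (hPmul : ∀ a ∈ P, ∀ b ∈ P, a * b ∈ P) (f : ι → A) (S : Finset ι) :
    ∀ a ∈ convexHull ℝ P, (∀ μ ∈ S, f μ ∈ convexHull ℝ P) →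
      a * ∏ μ ∈ S, f μ ∈ convexHull ℝ P := by
  classical
  induction S using Finset.induction_on with
  | empty => intro a ha _; simpa using ha
  | @insert μ S hμ ih =>
      intro a ha hf
      rw [Finset.prod_insert hμ, ← mul_assoc]
      exact ih (a * f μ) (hull_mul hPmul a ha _ (hf μ (Finset.mem_insert_self μ S)))
        (fun μ' hμ' => hf μ' (Finset.mem_insert_of_mem hμ'))

end Aux

/-- If `A` is a commutative Banach algebra with nonzero multiplicative continuous functional
`e`, and `P = {ν : e(ν) = 1, ‖ν‖ = 1}` is nonempty and closed under multiplication, then a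
topological left invariant mean exists: `m ∈ A**` positive (with respect to the cone of
functionals nonnegative on `P`) with `m(e) = ‖m‖ = 1` and `m(L_ν φ) = m(φ)` for all `ν ∈ P`,
`φ ∈ A*`, where `(L_ν φ)(μ) = φ(νμ)`. -/
theorem commutative_exists_TLIM
    {A : Type*} [NormedCommRing A] [NormedAlgebra ℂ A] [CompleteSpace A]
    (e : A →L[ℂ] ℂ) (he : e ≠ 0) (hmul : ∀ a b : A, e (a * b) = e a * e b)
    (P : Set A) (hP : P = {ν : A | e ν = 1 ∧ ‖ν‖ = 1})
    (hPne : P.Nonempty) (hPmul : ∀ a ∈ P, ∀ b ∈ P, a * b ∈ P) :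
    ∃ m : (A →L[ℂ] ℂ) →L[ℂ] ℂ,
      (∀ φ : A →L[ℂ] ℂ, (∀ ν ∈ P, ∃ r : ℝ, 0 ≤ r ∧ φ ν = r) →
        ∃ r : ℝ, 0 ≤ r ∧ m φ = r) ∧
      m e = 1 ∧ ‖m‖ = 1 ∧
      ∀ ν ∈ P, ∀ φ : A →L[ℂ] ℂ,
        m (φ.comp (ContinuousLinearMap.mul ℂ A ν)) = m φ := by
  classical
  obtain ⟨ν₀, hν₀⟩ := hPne
  have hPe : ∀ ν ∈ P, e ν = 1 := by intro ν hν; rw [hP] at hν; exact hν.1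
  have hPn : ∀ ν ∈ P, ‖ν‖ = 1 := by intro ν hν; rw [hP] at hν; exact hν.2
  -- `e 1 = 1`
  have he1 : e 1 = 1 := by
    have h : e 1 * e 1 = e 1 := by rw [← hmul, one_mul]
    by_cases h0 : e 1 = 0
    · exfalso
      apply he
      ext a
      have : e a = e a * e 1 := by rw [← hmul, mul_one]
      rw [ContinuousLinearMap.zero_apply, this, h0, mul_zero]
    · exact mul_right_cancel₀ h0 (by rw [h, one_mul])
  -- the character as a monoid hom
  let eM : A →* ℂ := ⟨⟨e, he1⟩, hmul⟩
  have heMe : ∀ a : A, eM a = e a := fun _ => rfl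
  -- `e` is norm-bounded by 1
  have heb : ∀ a : A, ‖e a‖ ≤ ‖a‖ := by
    intro a
    by_contra hcon
    push_neg at hcon
    have h0 : e a ≠ 0 := by
      intro h
      rw [h] at hcon
      simp at hcon
      exact absurd hcon (not_lt.mpr (norm_nonneg a))
    set b : A := (e a)⁻¹ • a with hb
    have hb1 : e b = 1 := by
      rw [hb, map_smul, smul_eq_mul, inv_mul_cancel₀ h0]
    have hbn : ‖b‖ < 1 := by
      rw [hb, norm_smul, norm_inv]
      have hea : 0 < ‖e a‖ := norm_pos_iff.mpr h0
      rw [inv_mul_lt_one₀ hea]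
      exact hcon
    have hpow : ∀ k : ℕ, e (b ^ k) = 1 := by
      intro k
      rw [← heMe, map_pow, heMe, hb1, one_pow]
    have htend : Tendsto (fun k : ℕ => ‖e‖ * ‖b‖ ^ k) atTop (𝓝 0) := by
      have := (tendsto_pow_atTop_nhds_zero_of_lt_one (norm_nonneg b) hbn).const_mul ‖e‖
      simpa using this
    obtain ⟨k, hk, hk1⟩ := ((htend.eventually (gt_mem_nhds one_pos)).and
      (eventually_ge_atTop 1)).exists
    have : (1 : ℝ) ≤ ‖e‖ * ‖b‖ ^ k := by
      calc (1 : ℝ) = ‖e (b ^ k)‖ := by rw [hpow k]; simp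
        _ ≤ ‖e‖ * ‖b ^ k‖ := e.le_opNorm _
        _ ≤ ‖e‖ * ‖b‖ ^ k := by
            gcongr
            exact norm_pow_le' _ hk1
    exact absurd this (not_le.mpr hk)
  have henorm : ‖e‖ ≤ 1 := e.opNorm_le_bound zero_le_one (fun a => by simpa using heb a)
  -- the index type and net
  let P' := {ν : A // ν ∈ P}
  let I := Finset P' × ℕ
  let x : I → A := fun i => birk ν₀ i.2 * ∏ μ ∈ i.1, birk (μ : A) i.2
  -- basic properties of the net
  have hxnorm : ∀ i : I, ‖x i‖ ≤ 1 := fun i =>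
    mul_prod_norm_le _ _ _ (birk_norm_le (hPn ν₀ hν₀) i.2)
      (fun μ _ => birk_norm_le (hPn μ μ.2) i.2)
  have hxhull : ∀ i : I, 1 ≤ i.2 → x i ∈ convexHull ℝ P := fun i hi =>
    mul_prod_hull_mem hPmul _ _ _ (birk_hull hPmul hν₀ hi)
      (fun μ _ => birk_hull hPmul μ.2 hi)
  have hbirkchar : ∀ ν ∈ P, ∀ n : ℕ, 1 ≤ n → e (birk ν n) = 1 := by
    intro ν hν n hn
    have hpowe : ∀ k : ℕ, e (ν ^ (k + 1)) = 1 := by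
      intro k
      rw [← heMe, map_pow, heMe, hPe ν hν, one_pow]
    rw [birk, map_smul, map_sum]
    simp only [hpowe]
    rw [Finset.sum_const, Finset.card_range, nsmul_eq_mul, mul_one, smul_eq_mul]
    have : (n : ℂ) ≠ 0 := Nat.cast_ne_zero.mpr (by omega)
    field_simp
  have hxe : ∀ i : I, 1 ≤ i.2 → e (x i) = 1 := by
    intro i hi
    have : eM (x i) = eM (birk ν₀ i.2) * ∏ μ ∈ i.1, eM (birk (μ : A) i.2) := by
      rw [map_mul, map_prod]
    rw [← heMe, this, heMe, hbirkchar ν₀ hν₀ i.2 hi, one_mul]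
    rw [Finset.prod_congr rfl (fun μ _ => by rw [heMe, hbirkchar (μ : A) μ.2 i.2 hi])]
    simp
  -- the almost-invariance estimate
  have hxinv : ∀ i : I, ∀ pν : P', pν ∈ i.1 → ‖(pν : A) * x i - x i‖ ≤ 2 / i.2 := by
    intro i pν hpν
    have hsplit : (pν : A) * x i - x i
        = (birk ν₀ i.2 * ∏ μ ∈ i.1.erase pν, birk (μ : A) i.2)
            * ((pν : A) * birk (pν : A) i.2 - birk (pν : A) i.2) := by
      show (pν : A) * (birk ν₀ i.2 * ∏ μ ∈ i.1, birk (μ : A) i.2)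
          - birk ν₀ i.2 * ∏ μ ∈ i.1, birk (μ : A) i.2 = _
      rw [← Finset.mul_prod_erase i.1 (fun μ => birk (μ : A) i.2) hpν]
      ring
    rw [hsplit]
    calc ‖(birk ν₀ i.2 * ∏ μ ∈ i.1.erase pν, birk (μ : A) i.2)
            * ((pν : A) * birk (pν : A) i.2 - birk (pν : A) i.2)‖
        ≤ ‖birk ν₀ i.2 * ∏ μ ∈ i.1.erase pν, birk (μ : A) i.2‖
            * ‖(pν : A) * birk (pν : A) i.2 - birk (pν : A) i.2‖ := norm_mul_le _ _
      _ ≤ 1 * (2 / i.2) := by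
          refine mul_le_mul ?_ (birk_shift_norm (hPn _ pν.2) i.2) (norm_nonneg _) zero_le_one
          exact mul_prod_norm_le _ _ _ (birk_norm_le (hPn ν₀ hν₀) i.2)
            (fun μ _ => birk_norm_le (hPn μ μ.2) i.2)
      _ = 2 / i.2 := one_mul _
  -- the ultrafilter
  haveI : Nonempty I := ⟨(∅, 0)⟩
  let u : Ultrafilter I := Ultrafilter.of atTop
  have hu : (u : Filter I) ≤ atTop := Ultrafilter.of_le _
  have hev1 : ∀ᶠ i : I in atTop, 1 ≤ i.2 :=
    eventually_atTop.2 ⟨(∅, 1), fun i hi => hi.2⟩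
  -- existence of limits along the ultrafilter
  have hlim : ∀ φ : A →L[ℂ] ℂ, ∃ L : ℂ, Tendsto (fun i => φ (x i)) (u : Filter I) (𝓝 L) := by
    intro φ
    have hcompact : IsCompact (Metric.closedBall (0 : ℂ) ‖φ‖) := isCompact_closedBall _ _
    have hmem : (Ultrafilter.map (fun i => φ (x i)) u : Filter ℂ)
        ≤ 𝓟 (Metric.closedBall (0 : ℂ) ‖φ‖) := by
      rw [le_principal_iff]
      refine Filter.mem_map.mpr (Filter.univ_mem' fun i => ?_)
      simp only [Set.mem_preimage, Metric.mem_closedBall, dist_zero_right]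
      calc ‖φ (x i)‖ ≤ ‖φ‖ * ‖x i‖ := φ.le_opNorm _
        _ ≤ ‖φ‖ * 1 := mul_le_mul_of_nonneg_left (hxnorm i) (norm_nonneg _)
        _ = ‖φ‖ := mul_one _
    obtain ⟨L, _, hL⟩ := hcompact.ultrafilter_le_nhds _ hmem
    exact ⟨L, hL⟩
  choose m₀ hm₀ using hlim
  -- linearity
  have hadd : ∀ φ ψ : A →L[ℂ] ℂ, m₀ (φ + ψ) = m₀ φ + m₀ ψ := by
    intro φ ψ
    refine tendsto_nhds_unique (hm₀ (φ + ψ)) ?_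
    have := (hm₀ φ).add (hm₀ ψ)
    exact this.congr (fun i => by simp)
  have hsmul : ∀ (c : ℂ) (φ : A →L[ℂ] ℂ), m₀ (c • φ) = c * m₀ φ := by
    intro c φ
    refine tendsto_nhds_unique (hm₀ (c • φ)) ?_
    have := (hm₀ φ).const_mul c
    exact this.congr (fun i => by simp)
  have hbound : ∀ φ : A →L[ℂ] ℂ, ‖m₀ φ‖ ≤ 1 * ‖φ‖ := by
    intro φ
    rw [one_mul]
    refine le_of_tendsto (hm₀ φ).norm (Filter.Eventually.of_forall fun i => ?_)
    calc ‖φ (x i)‖ ≤ ‖φ‖ * ‖x i‖ := φ.le_opNorm _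
      _ ≤ ‖φ‖ * 1 := mul_le_mul_of_nonneg_left (hxnorm i) (norm_nonneg _)
      _ = ‖φ‖ := mul_one _
  let mL : (A →L[ℂ] ℂ) →ₗ[ℂ] ℂ :=
    { toFun := m₀
      map_add' := hadd
      map_smul' := hsmul }
  let m : (A →L[ℂ] ℂ) →L[ℂ] ℂ := mL.mkContinuous 1 hbound
  have hmapp : ∀ φ, m φ = m₀ φ := fun _ => rfl
  refine ⟨m, ?_, ?_, ?_, ?_⟩
  -- positivity
  · intro φ hφ
    set C : Set ℂ := {z : ℂ | 0 ≤ z.re ∧ z.im = 0} with hC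
    have hCc : IsClosed C := by
      have : C = Complex.re ⁻¹' (Ici (0 : ℝ)) ∩ Complex.im ⁻¹' {0} := by
        ext z
        simp [hC]
      rw [this]
      exact (isClosed_Ici.preimage Complex.continuous_re).inter
        (isClosed_singleton.preimage Complex.continuous_im)
    have hCconv : Convex ℝ C := by
      intro z hz w hw a b ha hb hab
      constructor
      · simp only [Complex.add_re, Complex.smul_re, smul_eq_mul]
        exact add_nonneg (mul_nonneg ha hz.1) (mul_nonneg hb hw.1)
      · simp only [Complex.add_im, Complex.smul_im, hz.2, hw.2, smul_eq_mul,
          mul_zero, add_zero]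
    have hPC : ∀ ν ∈ P, φ ν ∈ C := by
      intro ν hν
      obtain ⟨r, hr, hφν⟩ := hφ ν hν
      rw [hφν]
      exact ⟨by simpa using hr, by simp⟩
    have hpre : Convex ℝ (φ ⁻¹' C) :=
      hCconv.is_linear_preimage ⟨map_add φ, fun c y => φ.map_smul_of_tower c y⟩
    have hhull : convexHull ℝ P ⊆ φ ⁻¹' C := convexHull_min hPC hpre
    have hev : ∀ᶠ i : I in (u : Filter I), φ (x i) ∈ C :=
      (hev1.filter_mono hu).mono fun i hi => hhull (hxhull i hi)
    have hmem : m₀ φ ∈ C := hCc.mem_of_tendsto (hm₀ φ) hev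
    refine ⟨(m₀ φ).re, hmem.1, ?_⟩
    rw [hmapp]
    exact (Complex.ext (by simp) (by simp [hmem.2])).symm
  -- m e = 1
  · have h1 : Tendsto (fun i => e (x i)) (u : Filter I) (𝓝 1) := by
      refine Tendsto.congr' ?_ (tendsto_const_nhds (x := (1 : ℂ)))
      exact (hev1.filter_mono hu).mono fun i hi => (hxe i hi).symm
    rw [hmapp]
    exact tendsto_nhds_unique (hm₀ e) h1
  -- norm 1
  · have hle : ‖m‖ ≤ 1 := mL.mkContinuous_norm_le zero_le_one hbound
    have hme : m e = 1 := by
      rw [hmapp]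
      refine tendsto_nhds_unique (hm₀ e) ?_
      refine Tendsto.congr' ?_ (tendsto_const_nhds (x := (1 : ℂ)))
      exact (hev1.filter_mono hu).mono fun i hi => (hxe i hi).symm
    have hge : (1 : ℝ) ≤ ‖m‖ := by
      have h := m.le_opNorm e
      rw [hme] at h
      simp only [norm_one] at h
      nlinarith [m.opNorm_nonneg, e.opNorm_nonneg]
    linarith
  -- invariance
  · intro ν hν φ
    set pν : P' := ⟨ν, hν⟩ with hpνdef
    have hevν : ∀ᶠ i : I in atTop, pν ∈ i.1 ∧ 1 ≤ i.2 :=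
      eventually_atTop.2 ⟨({pν}, 1), fun i hi =>
        ⟨Finset.singleton_subset_iff.mp hi.1, hi.2⟩⟩
    have hsnd : Tendsto (fun i : I => i.2) atTop atTop := by
      rw [show (atTop : Filter I) = (atTop : Filter (Finset P')) ×ˢ (atTop : Filter ℕ) from
        prod_atTop_atTop_eq.symm]
      exact tendsto_snd
    have hb : Tendsto (fun i : I => ‖φ‖ * (2 / (i.2 : ℝ))) atTop (𝓝 0) := by
      have h2 : Tendsto (fun i : I => 2 / (i.2 : ℝ)) atTop (𝓝 0) :=
        (tendsto_const_div_atTop_nhds_zero_nat 2).comp hsnd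
      simpa using h2.const_mul ‖φ‖
    have hdiff : Tendsto (fun i : I => φ (ν * x i) - φ (x i)) (u : Filter I) (𝓝 0) := by
      refine squeeze_zero_norm' ?_ (hb.mono_left hu)
      refine (hevν.filter_mono hu).mono fun i hi => ?_
      have : φ (ν * x i) - φ (x i) = φ (ν * x i - x i) := (map_sub φ _ _).symm
      rw [this]
      calc ‖φ (ν * x i - x i)‖ ≤ ‖φ‖ * ‖ν * x i - x i‖ := φ.le_opNorm _
        _ ≤ ‖φ‖ * (2 / i.2) := by
            gcongr
            exact hxinv i pν hi.1
    have hLν : Tendsto (fun i : I => (φ.comp (ContinuousLinearMap.mul ℂ A ν)) (x i))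
        (u : Filter I) (𝓝 (m₀ φ)) := by
      have h := (hm₀ φ).add hdiff
      rw [add_zero] at h
      refine h.congr fun i => ?_
      simp [ContinuousLinearMap.mul_apply']
    rw [hmapp, hmapp]
    exact tendsto_nhds_unique (hm₀ _) hLν
end
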